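/- Let H be the graph constructed from G and ℓ. For a vertex set S ⊆ V(H), define proj(S) = ((V ∪ X ∪ Y ∪ A ∪ B) ∩ S) ∪ { tail v of a one-way gadget D of H : some internal vertex of D lies in S }. Then |proj(S)| ≤ |S|, and if S is a target set for H, then proj(S) is also a target set for H. -/
import Mathlib


namespace TSS

variable {V : Type*}

/-- The set of active vertices after `i` steps of the activation process started from `S`. -/
def activeAt (G : SimpleGraph V) (τ : V → ℕ) (S : Set V) : ℕ → Set V
  | 0 => S
  | i + 1 => activeAt G τ S i ∪ { v | τ v ≤ (G.neighborSet v ∩ activeAt G τ S i).ncard }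

/-- The active vertex set `𝒜(S) = ⋃ i, 𝒜ⁱ(S)`. -/
def activeSet (G : SimpleGraph V) (τ : V → ℕ) (S : Set V) : Set V :=
  ⋃ i, activeAt G τ S i

/-- `S` is a target set for `(G, τ)` if it activates every vertex. -/
def IsTargetSet (G : SimpleGraph V) (τ : V → ℕ) (S : Set V) : Prop :=
  activeSet G τ S = Set.univ

/-- Minimum size of a target set. -/
noncomputable def optTS (G : SimpleGraph V) (τ : V → ℕ) : ℕ :=
  sInf { m | ∃ S : Set V, IsTargetSet G τ S ∧ S.ncard = m }

/-- A reconfiguration sequence `Sfam 0 = X, …, Sfam T = Y` of target sets where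
consecutive sets differ in exactly one vertex. -/
structure IsReconfSeq (G : SimpleGraph V) (τ : V → ℕ) (X Y : Set V) (T : ℕ)
    (Sfam : ℕ → Set V) : Prop where
  head : Sfam 0 = X
  last : Sfam T = Y
  target : ∀ t ≤ T, IsTargetSet G τ (Sfam t)
  step : ∀ t < T, (symmDiff (Sfam t) (Sfam (t + 1))).ncard = 1

/-- The size of a reconfiguration sequence: maximum cardinality of any member. -/
noncomputable def seqSize (T : ℕ) (Sfam : ℕ → Set V) : ℕ :=
  (Finset.range (T + 1)).sup fun t => (Sfam t).ncard

/-- `opt_G(X ⇝ Y)`: minimum size over all reconfiguration sequences from `X` to `Y`. -/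
noncomputable def optReconf (G : SimpleGraph V) (τ : V → ℕ) (X Y : Set V) : ℕ :=
  sInf { m | ∃ T Sfam, IsReconfSeq G τ X Y T Sfam ∧ seqSize T Sfam = m }

/-- The four internal vertices of a one-way gadget. -/
inductive GadVert where | t | h | b1 | b2

/-- Index set of the one-way gadgets of the graph `H` built from `G` (with degree
function `d`) and `ℓ`. -/
inductive GadIdx (V : Type*) (ℓ : ℕ) (d : V → ℕ) where
  | vx (v : V) (i : Fin ℓ)
  | xa (i : Fin ℓ) (v : V) (j : Fin (d v))
  | av (v : V) (j : Fin (d v))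
  | vy (v : V) (i : Fin ℓ)
  | yb (i : Fin ℓ) (v : V) (j : Fin (d v))
  | bv (v : V) (j : Fin (d v))

/-- Vertices of the graph `H`: a copy of `V`, the sets `X`, `Y`, `A`, `B`, and the
internal vertices of all one-way gadgets. -/
inductive HVert (V : Type*) (ℓ : ℕ) (d : V → ℕ) where
  | orig (v : V)
  | xx (i : Fin ℓ)
  | yy (i : Fin ℓ)
  | aa (v : V) (j : Fin (d v))
  | bb (v : V) (j : Fin (d v))
  | gad (D : GadIdx V ℓ d) (w : GadVert)

variable {ℓ : ℕ} {d : V → ℕ}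

/-- The tail of a one-way gadget. -/
def gadTail : GadIdx V ℓ d → HVert V ℓ d
  | .vx v _ => .orig v
  | .xa i _ _ => .xx i
  | .av v j => .aa v j
  | .vy v _ => .orig v
  | .yb i _ _ => .yy i
  | .bv v j => .bb v j

/-- The head of a one-way gadget. -/
def gadHead : GadIdx V ℓ d → HVert V ℓ d
  | .vx _ i => .xx i
  | .xa _ v j => .aa v j
  | .av v _ => .orig v
  | .vy _ i => .yy i
  | .yb _ v j => .bb v j
  | .bv v _ => .orig v

/-- Base edge relation of the graph `H`. -/
def HRel (G : SimpleGraph V) (ℓ : ℕ) (d : V → ℕ) : HVert V ℓ d → HVert V ℓ d → Prop :=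
  fun p q =>
    (∃ u v, G.Adj u v ∧ p = .orig u ∧ q = .orig v) ∨
    (∃ D, p = .gad D .t ∧ (q = .gad D .b1 ∨ q = .gad D .b2)) ∨
    (∃ D, p = .gad D .h ∧ (q = .gad D .b1 ∨ q = .gad D .b2)) ∨
    (∃ D, p = gadTail D ∧ q = .gad D .t) ∨
    (∃ D, p = gadHead D ∧ q = .gad D .h)

/-- The graph `H` constructed from `G` (with degree function `d`) and `ℓ`. -/
def graphH (G : SimpleGraph V) (ℓ : ℕ) (d : V → ℕ) : SimpleGraph (HVert V ℓ d) :=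
  SimpleGraph.fromRel (HRel G ℓ d)

/-- The threshold function `τ'` of `H`, where `n` is the number of vertices of `G`. -/
def tauH (τ : V → ℕ) (n ℓ : ℕ) (d : V → ℕ) : HVert V ℓ d → ℕ
  | .orig v => τ v
  | .xx _ => n
  | .yy _ => n
  | .aa _ _ => ℓ
  | .bb _ _ => ℓ
  | .gad _ .t => 1
  | .gad _ .b1 => 1
  | .gad _ .b2 => 1
  | .gad _ .h => 2

/-- The vertex set `X = {x₁, …, x_ℓ}` of `H`. -/
def XSet (V : Type*) (ℓ : ℕ) (d : V → ℕ) : Set (HVert V ℓ d) := Set.range HVert.xx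

/-- The vertex set `Y = {y₁, …, y_ℓ}` of `H`. -/
def YSet (V : Type*) (ℓ : ℕ) (d : V → ℕ) : Set (HVert V ℓ d) := Set.range HVert.yy

/-- The copy of `V` inside `V(H)`. -/
def OrigSet (V : Type*) (ℓ : ℕ) (d : V → ℕ) : Set (HVert V ℓ d) := Set.range HVert.orig

/-- The vertex set `A = {a_{v,j}}` of `H`. -/
def ASet (V : Type*) (ℓ : ℕ) (d : V → ℕ) : Set (HVert V ℓ d) :=
  { p | ∃ v j, p = HVert.aa v j }

/-- The vertex set `B = {b_{v,j}}` of `H`. -/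
def BSet (V : Type*) (ℓ : ℕ) (d : V → ℕ) : Set (HVert V ℓ d) :=
  { p | ∃ v j, p = HVert.bb v j }

end TSS

namespace TSS

/-- The projection of a vertex set of `H`: keep the vertices of `V ∪ X ∪ Y ∪ A ∪ B` and
replace any chosen internal vertex of a one-way gadget by the tail of that gadget. -/
def projGad {V : Type*} (ℓ : ℕ) (d : V → ℕ) (S : Set (HVert V ℓ d)) : Set (HVert V ℓ d) :=
  ((OrigSet V ℓ d ∪ XSet V ℓ d ∪ YSet V ℓ d ∪ ASet V ℓ d ∪ BSet V ℓ d) ∩ S) ∪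
    { p | ∃ D w, HVert.gad D w ∈ S ∧ p = gadTail D }

end TSS


namespace TSS

section Aux

variable {V : Type*}

instance : Finite GadVert :=
  Finite.of_surjective (fun p : Bool × Bool => match p with
    | (false, false) => GadVert.t | (false, true) => GadVert.h
    | (true, false) => GadVert.b1 | (true, true) => GadVert.b2)
    (by intro g; cases g
        exacts [⟨(false,false), rfl⟩, ⟨(false,true), rfl⟩, ⟨(true,false), rfl⟩, ⟨(true,true), rfl⟩])

variable {ℓ : ℕ} {d : V → ℕ}

instance [Finite V] : Finite (GadIdx V ℓ d) :=
  Finite.of_surjective (fun p : (V × Fin ℓ) ⊕ (Fin ℓ × Σ v, Fin (d v)) ⊕ (Σ v, Fin (d v)) ⊕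
      (V × Fin ℓ) ⊕ (Fin ℓ × Σ v, Fin (d v)) ⊕ (Σ v, Fin (d v)) => match p with
    | .inl (v, i) => GadIdx.vx v i
    | .inr (.inl (i, ⟨v, j⟩)) => GadIdx.xa i v j
    | .inr (.inr (.inl ⟨v, j⟩)) => GadIdx.av v j
    | .inr (.inr (.inr (.inl (v, i)))) => GadIdx.vy v i
    | .inr (.inr (.inr (.inr (.inl (i, ⟨v, j⟩))))) => GadIdx.yb i v j
    | .inr (.inr (.inr (.inr (.inr ⟨v, j⟩)))) => GadIdx.bv v j)
    (by intro g; cases g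
        case vx v i => exact ⟨.inl (v, i), rfl⟩
        case xa i v j => exact ⟨.inr (.inl (i, ⟨v, j⟩)), rfl⟩
        case av v j => exact ⟨.inr (.inr (.inl ⟨v, j⟩)), rfl⟩
        case vy v i => exact ⟨.inr (.inr (.inr (.inl (v, i)))), rfl⟩
        case yb i v j => exact ⟨.inr (.inr (.inr (.inr (.inl (i, ⟨v, j⟩))))), rfl⟩
        case bv v j => exact ⟨.inr (.inr (.inr (.inr (.inr ⟨v, j⟩)))), rfl⟩)

instance [Finite V] : Finite (HVert V ℓ d) :=
  Finite.of_surjective (fun p : V ⊕ Fin ℓ ⊕ Fin ℓ ⊕ (Σ v, Fin (d v)) ⊕ (Σ v, Fin (d v)) ⊕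
      (GadIdx V ℓ d × GadVert) => match p with
    | .inl v => HVert.orig v
    | .inr (.inl i) => HVert.xx i
    | .inr (.inr (.inl i)) => HVert.yy i
    | .inr (.inr (.inr (.inl ⟨v, j⟩))) => HVert.aa v j
    | .inr (.inr (.inr (.inr (.inl ⟨v, j⟩)))) => HVert.bb v j
    | .inr (.inr (.inr (.inr (.inr (D, w))))) => HVert.gad D w)
    (by intro g; cases g
        case orig v => exact ⟨.inl v, rfl⟩
        case xx i => exact ⟨.inr (.inl i), rfl⟩
        case yy i => exact ⟨.inr (.inr (.inl i)), rfl⟩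
        case aa v j => exact ⟨.inr (.inr (.inr (.inl ⟨v, j⟩))), rfl⟩
        case bb v j => exact ⟨.inr (.inr (.inr (.inr (.inl ⟨v, j⟩)))), rfl⟩
        case gad D w => exact ⟨.inr (.inr (.inr (.inr (.inr (D, w))))), rfl⟩)

lemma activeAt_succ' (G : SimpleGraph V) (τ : V → ℕ) (S : Set V) (i : ℕ) :
    activeAt G τ S (i + 1) =
      activeAt G τ S i ∪ { v | τ v ≤ (G.neighborSet v ∩ activeAt G τ S i).ncard } := rfl

lemma activeAt_mono (G : SimpleGraph V) (τ : V → ℕ) (S : Set V) :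
    Monotone (activeAt G τ S) :=
  monotone_nat_of_le_succ fun _ => Set.subset_union_left

lemma activeAt_subset_activeSet (G : SimpleGraph V) (τ : V → ℕ) (S : Set V) (i : ℕ) :
    activeAt G τ S i ⊆ activeSet G τ S := fun _ hp => Set.mem_iUnion.2 ⟨i, hp⟩

lemma subset_activeSet (G : SimpleGraph V) (τ : V → ℕ) (S : Set V) :
    S ⊆ activeSet G τ S := activeAt_subset_activeSet G τ S 0

lemma finite_subset_activeAt (G : SimpleGraph V) (τ : V → ℕ) (S : Set V)
    {F : Set V} (hF : F.Finite) (h : F ⊆ activeSet G τ S) :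
    ∃ N, F ⊆ activeAt G τ S N := by
  classical
  have h' : ∀ x ∈ hF.toFinset, ∃ n, x ∈ activeAt G τ S n := fun x hx =>
    Set.mem_iUnion.1 (h (hF.mem_toFinset.1 hx))
  choose! idx hidx using h'
  refine ⟨hF.toFinset.sup idx, fun x hx => ?_⟩
  have hx' : x ∈ hF.toFinset := hF.mem_toFinset.2 hx
  exact activeAt_mono G τ S (Finset.le_sup hx') (hidx x hx')

lemma mem_activeSet_of_threshold [Finite V] (G : SimpleGraph V) (τ : V → ℕ) (S : Set V)
    {p : V} (h : τ p ≤ ((G.neighborSet p ∩ activeSet G τ S).ncard)) :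
    p ∈ activeSet G τ S := by
  obtain ⟨N, hN⟩ := finite_subset_activeAt G τ S (Set.toFinite _)
    (Set.inter_subset_right (s := G.neighborSet p))
  refine activeAt_subset_activeSet G τ S (N + 1) (Or.inr ?_)
  exact h.trans (Set.ncard_le_ncard (fun x hx => ⟨hx.1, hN hx⟩) (Set.toFinite _))

lemma gadTail_ne_gad' (D D' : GadIdx V ℓ d) (w : GadVert) : gadTail D ≠ HVert.gad D' w := by
  cases D <;> simp [gadTail]

lemma gadTail_ne_gad (D : GadIdx V ℓ d) (w : GadVert) : gadTail D ≠ HVert.gad D w :=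
  gadTail_ne_gad' D D w

lemma adj_tail_t (G : SimpleGraph V) (D : GadIdx V ℓ d) :
    (graphH G ℓ d).Adj (gadTail D) (HVert.gad D GadVert.t) :=
  (SimpleGraph.fromRel_adj _ _ _).2 ⟨gadTail_ne_gad D _,
    Or.inl (Or.inr (Or.inr (Or.inr (Or.inl ⟨D, rfl, rfl⟩))))⟩

lemma adj_t_b1 (G : SimpleGraph V) (D : GadIdx V ℓ d) :
    (graphH G ℓ d).Adj (HVert.gad D GadVert.t) (HVert.gad D GadVert.b1) :=
  (SimpleGraph.fromRel_adj _ _ _).2 ⟨by simp,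
    Or.inl (Or.inr (Or.inl ⟨D, rfl, Or.inl rfl⟩))⟩

lemma adj_t_b2 (G : SimpleGraph V) (D : GadIdx V ℓ d) :
    (graphH G ℓ d).Adj (HVert.gad D GadVert.t) (HVert.gad D GadVert.b2) :=
  (SimpleGraph.fromRel_adj _ _ _).2 ⟨by simp,
    Or.inl (Or.inr (Or.inl ⟨D, rfl, Or.inr rfl⟩))⟩

lemma adj_h_b1 (G : SimpleGraph V) (D : GadIdx V ℓ d) :
    (graphH G ℓ d).Adj (HVert.gad D GadVert.h) (HVert.gad D GadVert.b1) :=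
  (SimpleGraph.fromRel_adj _ _ _).2 ⟨by simp,
    Or.inl (Or.inr (Or.inr (Or.inl ⟨D, rfl, Or.inl rfl⟩)))⟩

lemma adj_h_b2 (G : SimpleGraph V) (D : GadIdx V ℓ d) :
    (graphH G ℓ d).Adj (HVert.gad D GadVert.h) (HVert.gad D GadVert.b2) :=
  (SimpleGraph.fromRel_adj _ _ _).2 ⟨by simp,
    Or.inl (Or.inr (Or.inr (Or.inl ⟨D, rfl, Or.inr rfl⟩)))⟩

lemma one_le_ncard_nbr [Finite V] {G : SimpleGraph V} {T : Set V} {p q : V}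
    (hadj : G.Adj p q) (hq : q ∈ T) : 1 ≤ (G.neighborSet p ∩ T).ncard :=
  (Set.ncard_pos (Set.toFinite _)).2 ⟨q, hadj, hq⟩

lemma gad_active [Finite V] (G : SimpleGraph V) (n : ℕ) (τ : V → ℕ)
    (S : Set (HVert V ℓ d)) (D : GadIdx V ℓ d)
    (h : gadTail D ∈ activeSet (graphH G ℓ d) (tauH τ n ℓ d) S) (w : GadVert) :
    HVert.gad D w ∈ activeSet (graphH G ℓ d) (tauH τ n ℓ d) S := by
  have ht : HVert.gad D GadVert.t ∈ activeSet (graphH G ℓ d) (tauH τ n ℓ d) S :=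
    mem_activeSet_of_threshold _ _ _ (one_le_ncard_nbr (adj_tail_t G D).symm h)
  have hb1 : HVert.gad D GadVert.b1 ∈ activeSet (graphH G ℓ d) (tauH τ n ℓ d) S :=
    mem_activeSet_of_threshold _ _ _ (one_le_ncard_nbr (adj_t_b1 G D).symm ht)
  have hb2 : HVert.gad D GadVert.b2 ∈ activeSet (graphH G ℓ d) (tauH τ n ℓ d) S :=
    mem_activeSet_of_threshold _ _ _ (one_le_ncard_nbr (adj_t_b2 G D).symm ht)
  have hh : HVert.gad D GadVert.h ∈ activeSet (graphH G ℓ d) (tauH τ n ℓ d) S := by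
    refine mem_activeSet_of_threshold _ _ _ ?_
    have hsub : ({HVert.gad D GadVert.b1, HVert.gad D GadVert.b2} : Set (HVert V ℓ d)) ⊆
        (graphH G ℓ d).neighborSet (HVert.gad D GadVert.h) ∩
          activeSet (graphH G ℓ d) (tauH τ n ℓ d) S := by
      rintro x (rfl | rfl)
      · exact ⟨adj_h_b1 G D, hb1⟩
      · exact ⟨adj_h_b2 G D, hb2⟩
    calc tauH τ n ℓ d (HVert.gad D GadVert.h) = 2 := rfl
      _ = ({HVert.gad D GadVert.b1, HVert.gad D GadVert.b2} : Set (HVert V ℓ d)).ncard :=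
          (Set.ncard_pair (by simp)).symm
      _ ≤ _ := Set.ncard_le_ncard hsub (Set.toFinite _)
  cases w
  exacts [ht, hh, hb1, hb2]

lemma mem_projGad_of_mem_S {S : Set (HVert V ℓ d)} {p : HVert V ℓ d}
    (hp : p ∈ S) (hng : ∀ D w, p ≠ HVert.gad D w) : p ∈ projGad ℓ d S := by
  cases p with
  | orig v => exact Or.inl ⟨Or.inl (Or.inl (Or.inl (Or.inl ⟨v, rfl⟩))), hp⟩
  | xx i => exact Or.inl ⟨Or.inl (Or.inl (Or.inl (Or.inr ⟨i, rfl⟩))), hp⟩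
  | yy i => exact Or.inl ⟨Or.inl (Or.inl (Or.inr ⟨i, rfl⟩)), hp⟩
  | aa v j => exact Or.inl ⟨Or.inl (Or.inr ⟨v, j, rfl⟩), hp⟩
  | bb v j => exact Or.inl ⟨Or.inr ⟨v, j, rfl⟩, hp⟩
  | gad D w => exact absurd rfl (hng D w)

lemma gadTail_mem_projGad {S : Set (HVert V ℓ d)} {D : GadIdx V ℓ d} {w : GadVert}
    (hp : HVert.gad D w ∈ S) : gadTail D ∈ projGad ℓ d S := Or.inr ⟨D, w, hp, rfl⟩

lemma projGad_nongad {S : Set (HVert V ℓ d)} {p : HVert V ℓ d}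
    (hp : p ∈ projGad ℓ d S) (D' : GadIdx V ℓ d) (w' : GadVert) : p ≠ HVert.gad D' w' := by
  rcases hp with ⟨hp1, _⟩ | ⟨D, w, _, rfl⟩
  · rcases hp1 with ((((⟨v, rfl⟩ | ⟨i, rfl⟩) | ⟨i, rfl⟩) | ⟨v, j, rfl⟩) | ⟨v, j, rfl⟩) <;> simp
  · exact gadTail_ne_gad' D D' w'

lemma mem_projGad_elim {S : Set (HVert V ℓ d)} {p : HVert V ℓ d}
    (hp : p ∈ projGad ℓ d S) (hpns : p ∉ S) :
    ∃ D, (∃ w, HVert.gad D w ∈ S) ∧ p = gadTail D := by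
  rcases hp with ⟨_, hpS⟩ | ⟨D, w, hw, rfl⟩
  · exact absurd hpS hpns
  · exact ⟨D, ⟨w, hw⟩, rfl⟩

lemma ncard_projGad_le [Finite V] (S : Set (HVert V ℓ d)) :
    (projGad ℓ d S).ncard ≤ S.ncard := by
  classical
  set f : HVert V ℓ d → HVert V ℓ d := fun p =>
    if p ∈ S then p
    else if hp : ∃ D, (∃ w, HVert.gad D w ∈ S) ∧ p = gadTail D then
      HVert.gad hp.choose hp.choose_spec.1.choose
    else p with hf
  refine Set.ncard_le_ncard_of_injOn f ?_ ?_ (Set.toFinite S)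
  · intro p hp
    by_cases hpS : p ∈ S
    · simpa [hf, hpS] using hpS
    · have h := mem_projGad_elim hp hpS
      simp only [hf, if_neg hpS, dif_pos h]
      exact h.choose_spec.1.choose_spec
  · intro a ha b hb hab
    by_cases haS : a ∈ S <;> by_cases hbS : b ∈ S
    · simpa [hf, haS, hbS] using hab
    · exfalso
      have h := mem_projGad_elim hb hbS
      simp only [hf, if_pos haS, if_neg hbS, dif_pos h] at hab
      exact projGad_nongad ha _ _ hab
    · exfalso
      have h := mem_projGad_elim ha haS
      simp only [hf, if_neg haS, dif_pos h, if_pos hbS] at hab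
      exact projGad_nongad hb _ _ hab.symm
    · have h1 := mem_projGad_elim ha haS
      have h2 := mem_projGad_elim hb hbS
      simp only [hf, if_neg haS, if_neg hbS, dif_pos h1, dif_pos h2, HVert.gad.injEq] at hab
      rw [h1.choose_spec.2, h2.choose_spec.2, hab.1]

lemma isTargetSet_projGad [Finite V] (G : SimpleGraph V) (n : ℕ) (τ : V → ℕ)
    (S : Set (HVert V ℓ d))
    (hS : IsTargetSet (graphH G ℓ d) (tauH τ n ℓ d) S) :
    IsTargetSet (graphH G ℓ d) (tauH τ n ℓ d) (projGad ℓ d S) := by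
  set H := graphH G ℓ d with hH
  set τ' := tauH τ n ℓ d with hτ'
  set P := projGad ℓ d S with hP
  have hbase : S ⊆ activeSet H τ' P := by
    intro p hp
    by_cases hg : ∃ D w, p = HVert.gad D w
    · obtain ⟨D, w, rfl⟩ := hg
      exact gad_active G n τ P D (subset_activeSet H τ' P (gadTail_mem_projGad hp)) w
    · push_neg at hg
      exact subset_activeSet H τ' P (mem_projGad_of_mem_S hp fun D w => hg D w)
  have hstep : ∀ i, activeAt H τ' S i ⊆ activeSet H τ' P := by
    intro i
    induction i with
    | zero => exact hbase
    | succ i ih =>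
      intro p hp
      rw [activeAt_succ'] at hp
      rcases hp with hp | hp
      · exact ih hp
      · exact mem_activeSet_of_threshold H τ' P
          (hp.trans (Set.ncard_le_ncard
            (Set.inter_subset_inter_right _ ih) (Set.toFinite _)))
  rw [IsTargetSet, Set.eq_univ_iff_forall]
  intro p
  have hp : p ∈ activeSet H τ' S := hS ▸ Set.mem_univ p
  obtain ⟨i, hi⟩ := Set.mem_iUnion.1 hp
  exact hstep i hi

end Aux

end TSS

open TSS in
/-- `|proj(S)| ≤ |S|`, and if `S` is a target set for `H` then so is `proj(S)`. -/
theorem stmt11 {V : Type*} [Fintype V] (G : SimpleGraph V) [DecidableRel G.Adj] (τ : V → ℕ)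
    (ℓ : ℕ) (hℓ : 1 ≤ ℓ) (hiso : ∀ v : V, 0 < G.degree v) (hτ : ∀ v : V, τ v ≤ G.degree v)
    (S : Set (HVert V ℓ (fun v => G.degree v))) :
    (projGad ℓ (fun v => G.degree v) S).ncard ≤ S.ncard ∧
      (IsTargetSet (graphH G ℓ (fun v => G.degree v)) (tauH τ (Fintype.card V) ℓ (fun v => G.degree v)) S →
        IsTargetSet (graphH G ℓ (fun v => G.degree v)) (tauH τ (Fintype.card V) ℓ (fun v => G.degree v))
          (projGad ℓ (fun v => G.degree v) S)) := by
  exact ⟨ncard_projGad_le S, isTargetSet_projGad G (Fintype.card V) τ S⟩
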